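/- There exists a unique continuously differentiable function f̂ : [0,T] → ℝ such that for every t ∈ [0,T], f̂(t)·γ₀·Ĥ₂[f̂](t) = Ĥ₁[f̂](t) + γ₀·(Ĝ₁[f̂](t)² − Ĥ₂[f̂](t)); note that the denominator γ₀·Ĥ₂[f̂](t) is automatically strictly positive. (Corollary 2: the equation system (40) characterizing the robust equilibrium investment strategy of the ambiguity-averse mean-variance investor without skewness preference, i.e. the case φ₀ = 0 of Theorem 4.1.) -/

import Mathlib

open MeasureTheory Set

/-- `Ĝ₁[f](t) = exp(∫_t^T (r(s) + Θ(s) f(s)/(ξ+1)²) ds)`. -/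
noncomputable def G1h (T ξ : ℝ) (r Θ f : ℝ → ℝ) (t : ℝ) : ℝ :=
  Real.exp (∫ s in t..T, r s + Θ s * f s / (ξ + 1) ^ 2)

/-- `Ĥ₂[f](t) = exp(∫_t^T (2r(s) + 2Θ(s)f(s)/(ξ+1)² + Θ(s)f(s)²/(ξ+1)²) ds)`. -/
noncomputable def H2h (T ξ : ℝ) (r Θ f : ℝ → ℝ) (t : ℝ) : ℝ :=
  Real.exp (∫ s in t..T,
    2 * r s + 2 * Θ s * f s / (ξ + 1) ^ 2 + Θ s * f s ^ 2 / (ξ + 1) ^ 2)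

/-- `Ĥ₁[f](t) = Ĝ₁[f](t) + ∫_t^T (ξΘ(s)f(s)²/(2(ξ+1)²)) γ₀ Ĥ₂[f](s)
  exp(∫_t^s (r(u) + Θ(u)f(u)/(ξ+1)²) du) ds`. -/
noncomputable def H1h (T ξ γ₀ : ℝ) (r Θ f : ℝ → ℝ) (t : ℝ) : ℝ :=
  G1h T ξ r Θ f t +
    ∫ s in t..T,
      (ξ * Θ s * f s ^ 2 / (2 * (ξ + 1) ^ 2)) * (γ₀ * H2h T ξ r Θ f s) *
        Real.exp (∫ u in t..s, r u + Θ u * f u / (ξ + 1) ^ 2)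

/-- `f` is a C¹ solution on `[0,T]` of the equation system (40) of the
ambiguity-averse mean-variance investor without skewness preference. -/
def SolvesMVIE (T ξ γ₀ : ℝ) (r Θ f : ℝ → ℝ) : Prop :=
  ContDiffOn ℝ 1 f (Set.Icc 0 T) ∧
    ∀ t ∈ Set.Icc 0 T,
      f t * (γ₀ * H2h T ξ r Θ f t) =
        H1h T ξ γ₀ r Θ f t + γ₀ * (G1h T ξ r Θ f t ^ 2 - H2h T ξ r Θ f t)


/-!
Dividing the equation by `γ₀ Ĥ₂[f](t) > 0` turns it into a fixed-point equation `f = Φ f`,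
where `Φ f` is built from the primitives `P`, `Q` of `ψ = r + Θ (f + f²) / (ξ + 1)²` and
`q = Θ f² / (ξ + 1)²`. Since `ψ ≥ q / 2 - C`, the weight `exp (P t - P s)` is dominated by
`exp (C T - (Q s - Q t) / 2)`, and `∫ q exp (-(Q s - Q t) / 2) ≤ 2`; hence `|Φ f| ≤ M` for a
constant `M` independent of `f`. For `|f|, |g| ≤ M`, `Φ` obeys the backward Volterra estimate
`|Φ f t - Φ g t| ≤ L ∫_t^T |f - g|`, so `Φⁿ` is `(L T)ⁿ / n!`-Lipschitz in the sup norm: some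
iterate is a contraction of the `M`-ball, whose fixed point is the unique solution, as every
solution lies in that ball. It is C¹ because `Φ f` is C¹ for continuous `f`.
-/

open Real intervalIntegral Function
open scoped Nat

theorem Real.abs_exp_sub_exp_le {x y c : ℝ} (hx : x ≤ c) (hy : y ≤ c) :
    |exp x - exp y| ≤ exp c * |x - y| := by
  wlog h : y ≤ x generalizing x y
  · rw [abs_sub_comm, abs_sub_comm x y]; exact this hy hx (le_of_not_ge h)
  rw [abs_of_nonneg (sub_nonneg.2 (exp_le_exp.2 h)), abs_of_nonneg (sub_nonneg.2 h)]
  have h1 : exp (y - x) * exp x = exp y := by rw [← exp_add]; ring_nf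
  nlinarith [add_one_le_exp (y - x), exp_le_exp.2 hx, exp_pos x]

theorem abs_sq_sub_sq_le {x y M : ℝ} (hx : |x| ≤ M) (hy : |y| ≤ M) :
    |x ^ 2 - y ^ 2| ≤ (1 + 2 * M) * |x - y| := by
  rw [sq_sub_sq, abs_mul]
  exact mul_le_mul_of_nonneg_right (by linarith [abs_add_le x y]) (abs_nonneg _)

theorem abs_add_sq_sub_add_sq_le {x y M : ℝ} (hx : |x| ≤ M) (hy : |y| ≤ M) :
    |(x + x ^ 2) - (y + y ^ 2)| ≤ (1 + 2 * M) * |x - y| := by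
  have h1 := abs_add_le (1 + x) y
  have h2 := abs_add_le 1 x
  rw [abs_one] at h2
  rw [show x + x ^ 2 - (y + y ^ 2) = (1 + x + y) * (x - y) by ring, abs_mul]
  exact mul_le_mul_of_nonneg_right (by linarith) (abs_nonneg _)

theorem abs_mul_div_sq_le {ξ θ C x : ℝ} (hξ : 0 ≤ ξ) (hθ0 : 0 ≤ θ) (hθC : θ ≤ C) :
    |θ * x / (ξ + 1) ^ 2| ≤ C * |x| := by
  have hξ1 : 1 ≤ (ξ + 1) ^ 2 := by nlinarith
  rw [abs_div, abs_mul, abs_of_nonneg hθ0, abs_of_pos (one_pos.trans_le hξ1)]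
  calc θ * |x| / (ξ + 1) ^ 2 ≤ θ * |x| := div_le_self (by positivity) hξ1
    _ ≤ C * |x| := by gcongr

theorem Continuous.contDiff_one_integral {g : ℝ → ℝ} (hg : Continuous g) (a : ℝ) :
    ContDiff ℝ 1 (fun u => ∫ s in a..u, g s) := by
  have hderiv (t : ℝ) : HasDerivAt (fun u => ∫ s in a..u, g s) (g t) t :=
    (hg.integral_hasStrictDerivAt a t).hasDerivAt
  rw [contDiff_one_iff_deriv]
  exact ⟨fun t => (hderiv t).differentiableAt, by rwa [funext fun t => (hderiv t).deriv]⟩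

theorem ContinuousOn.intervalIntegrable_of_mem_Icc {g : ℝ → ℝ} {a b t u : ℝ}
    (hg : ContinuousOn g (Icc a b)) (ht : t ∈ Icc a b) (hu : u ∈ Icc a b) :
    IntervalIntegrable g volume t u :=
  (hg.mono (uIcc_subset_Icc ht hu)).intervalIntegrable

theorem integral_sub_pow (a b : ℝ) (n : ℕ) :
    ∫ s in a..b, (b - s) ^ n = (b - a) ^ (n + 1) / (n + 1) := by
  rw [integral_comp_sub_left (fun x => x ^ n), integral_pow, sub_self,
    zero_pow n.succ_ne_zero, sub_zero]

theorem integral_mul_exp_sub_div_two {g G : ℝ → ℝ} (hG : ∀ s, HasDerivAt G (g s) s)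
    (hg : Continuous g) (a b : ℝ) :
    ∫ s in a..b, g s * exp ((G a - G s) / 2) = 2 - 2 * exp ((G a - G b) / 2) := by
  have hGc : Continuous G := continuous_iff_continuousAt.2 fun s => (hG s).continuousAt
  rw [integral_eq_sub_of_hasDerivAt (f := fun u => -2 * exp ((G a - G u) / 2))
    (fun s _ => ((((hG s).const_sub (G a)).div_const 2).exp.const_mul (-2)).congr_deriv (by ring))
    (Continuous.intervalIntegrable (by fun_prop) _ _)]
  simp only [sub_self, zero_div, exp_zero]
  ring

theorem abs_primitive_sub_sub_le {ρ₁ ρ₂ w : ℝ → ℝ} {K t v T : ℝ} (hρ₁ : Continuous ρ₁)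
    (hρ₂ : Continuous ρ₂) (hw : Continuous w) (hw0 : ∀ s, 0 ≤ w s) (hK : 0 ≤ K)
    (hρ : ∀ s, |ρ₁ s - ρ₂ s| ≤ K * w s) (htv : t ≤ v) (hvT : v ≤ T) :
    |((∫ s in (0 : ℝ)..t, ρ₁ s) - ∫ s in (0 : ℝ)..v, ρ₁ s) -
        ((∫ s in (0 : ℝ)..t, ρ₂ s) - ∫ s in (0 : ℝ)..v, ρ₂ s)| ≤
      K * ∫ s in t..T, w s := by
  have hdiff : ((∫ s in (0 : ℝ)..t, ρ₁ s) - ∫ s in (0 : ℝ)..v, ρ₁ s) -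
      ((∫ s in (0 : ℝ)..t, ρ₂ s) - ∫ s in (0 : ℝ)..v, ρ₂ s) = -∫ s in t..v, (ρ₁ s - ρ₂ s) := by
    rw [integral_sub (hρ₁.intervalIntegrable _ _) (hρ₂.intervalIntegrable _ _),
      ← integral_interval_sub_left (hρ₁.intervalIntegrable 0 v) (hρ₁.intervalIntegrable 0 t),
      ← integral_interval_sub_left (hρ₂.intervalIntegrable 0 v) (hρ₂.intervalIntegrable 0 t)]
    ring
  rw [hdiff, abs_neg]
  calc _ ≤ ∫ s in t..v, |ρ₁ s - ρ₂ s| := abs_integral_le_integral_abs htv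
    _ ≤ ∫ s in t..v, K * w s :=
        integral_mono_on htv (Continuous.intervalIntegrable (by fun_prop) _ _)
          (Continuous.intervalIntegrable (by fun_prop) _ _) fun s _ => hρ s
    _ ≤ K * ∫ s in t..T, w s := by
        rw [intervalIntegral.integral_const_mul]
        gcongr
        exact integral_mono_interval le_rfl htv hvT (Filter.Eventually.of_forall hw0)
          (hw.intervalIntegrable _ _)

theorem le_pow_div_factorial_of_le_integral {a b L D : ℝ} (hL : 0 ≤ L) {u : ℕ → ℝ → ℝ}
    (hu : ∀ n, ContinuousOn (u n) (Icc a b)) (h0 : ∀ t ∈ Icc a b, u 0 t ≤ D)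
    (hsucc : ∀ n, ∀ t ∈ Icc a b, u (n + 1) t ≤ L * ∫ s in t..b, u n s) (n : ℕ) :
    ∀ t ∈ Icc a b, u n t ≤ D * (L * (b - t)) ^ n / n ! := by
  induction n with
  | zero => simpa using h0
  | succ n ih =>
    intro t ht
    have hsub : Icc t b ⊆ Icc a b := Icc_subset_Icc_left ht.1
    calc u (n + 1) t ≤ L * ∫ s in t..b, u n s := hsucc n t ht
      _ ≤ L * ∫ s in t..b, D * L ^ n / n ! * (b - s) ^ n := by
          gcongr
          refine integral_mono_on ht.2 ((hu n).mono hsub |>.intervalIntegrable_of_Icc ht.2)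
            (Continuous.intervalIntegrable (by fun_prop) _ _) fun s hs => ?_
          calc u n s ≤ D * (L * (b - s)) ^ n / n ! := ih s (hsub hs)
            _ = D * L ^ n / n ! * (b - s) ^ n := by rw [mul_pow]; ring
      _ = D * (L * (b - t)) ^ (n + 1) / (n + 1)! := by
          rw [intervalIntegral.integral_const_mul, integral_sub_pow, Nat.factorial_succ]
          push_cast
          field_simp
          rw [mul_pow]
          ring

theorem exists_unique_isFixedPt_of_dist_iterate_le {α : Type*} [MetricSpace α]
    [CompleteSpace α] [Nonempty α] {F : α → α} {C : ℝ}
    (hF : ∀ n x y, dist (F^[n] x) (F^[n] y) ≤ C ^ n / n ! * dist x y) :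
    ∃! x, IsFixedPt F x := by
  obtain ⟨n, hn⟩ : ∃ n : ℕ, C ^ n / n ! < 1 :=
    ((FloorSemiring.tendsto_pow_div_factorial_atTop C).eventually (gt_mem_nhds one_pos)).exists
  have hcontr : ContractingWith (C ^ n / n !).toNNReal F^[n] :=
    ⟨Real.toNNReal_lt_one.2 hn, LipschitzWith.of_dist_le_mul fun x y =>
      (hF n x y).trans (mul_le_mul_of_nonneg_right (Real.le_coe_toNNReal _) dist_nonneg)⟩
  exact ⟨_, hcontr.isFixedPt_fixedPoint_iterate,
    fun y hy => hcontr.fixedPoint_unique (hy.iterate n)⟩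

theorem dist_iterate_le_of_volterra {a b L : ℝ} (hab : a ≤ b) (hL : 0 ≤ L)
    {S : Set C(Icc a b, ℝ)} {F : S → S}
    (hF : ∀ h₁ h₂ : S, ∀ t ∈ Icc a b, |IccExtend hab (F h₁).1 t - IccExtend hab (F h₂).1 t| ≤
      L * ∫ s in t..b, |IccExtend hab h₁.1 s - IccExtend hab h₂.1 s|)
    (n : ℕ) (h₁ h₂ : S) :
    dist (F^[n] h₁) (F^[n] h₂) ≤ (L * (b - a)) ^ n / n ! * dist h₁ h₂ := by
  have : CompactSpace (Icc a b) := isCompact_iff_compactSpace.mp isCompact_Icc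
  have hpt := le_pow_div_factorial_of_le_integral hL (D := dist h₁ h₂)
    (u := fun n t => |IccExtend hab (F^[n] h₁).1 t - IccExtend hab (F^[n] h₂).1 t|)
    (fun n => by fun_prop)
    (fun t ht => by
      simpa only [iterate_zero, id, IccExtend_of_mem hab _ ht, ← Real.dist_eq, Subtype.dist_eq]
        using ContinuousMap.dist_apply_le_dist (f := h₁.1) (g := h₂.1) ⟨t, ht⟩)
    (fun n t ht => by simpa only [iterate_succ_apply'] using hF _ _ t ht) n
  rw [Subtype.dist_eq, ContinuousMap.dist_le (by positivity)]
  intro x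
  calc dist ((F^[n] h₁).1 x) ((F^[n] h₂).1 x) =
        |IccExtend hab (F^[n] h₁).1 x - IccExtend hab (F^[n] h₂).1 x| := by
        simp only [IccExtend_val, Real.dist_eq]
    _ ≤ dist h₁ h₂ * (L * (b - x)) ^ n / n ! := hpt x x.2
    _ ≤ (L * (b - a)) ^ n / n ! * dist h₁ h₂ := by
        rw [mul_div_assoc, mul_comm]
        gcongr
        · exact mul_nonneg hL (sub_nonneg.2 x.2.2)
        · exact x.2.1

theorem exists_unique_eqOn_of_volterra {a b M L : ℝ} (hab : a ≤ b) (hL : 0 ≤ L)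
    {Φ : (ℝ → ℝ) → ℝ → ℝ}
    (hlocal : ∀ f g, EqOn f g (Icc a b) → EqOn (Φ f) (Φ g) (Icc a b))
    (hcont : ∀ f, Continuous f → ContinuousOn (Φ f) (Icc a b))
    (hbound : ∀ f, Continuous f → ∀ t ∈ Icc a b, |Φ f t| ≤ M)
    (hlip : ∀ f g, Continuous f → Continuous g → (∀ s, |f s| ≤ M) → (∀ s, |g s| ≤ M) →
      ∀ t ∈ Icc a b, |Φ f t - Φ g t| ≤ L * ∫ s in t..b, |f s - g s|) :
    ∃ f, Continuous f ∧ EqOn f (Φ f) (Icc a b) ∧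
      ∀ g, ContinuousOn g (Icc a b) → EqOn g (Φ g) (Icc a b) → EqOn g f (Icc a b) := by
  have : CompactSpace (Icc a b) := isCompact_iff_compactSpace.mp isCompact_Icc
  have hM : 0 ≤ M := (abs_nonneg _).trans (hbound 0 continuous_const a ⟨le_rfl, hab⟩)
  set B := Metric.closedBall (0 : C(Icc a b, ℝ)) M
  have mem_B (h : C(Icc a b, ℝ)) : h ∈ B ↔ ∀ x, |h x| ≤ M := by
    rw [mem_closedBall_zero_iff, ContinuousMap.norm_le _ hM]; rfl
  have : CompleteSpace B := Metric.isClosed_closedBall.completeSpace_coe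
  have : Nonempty B := ⟨⟨0, Metric.mem_closedBall_self hM⟩⟩
  let ext (h : B) : ℝ → ℝ := IccExtend hab h.1
  have ext_cont (h : B) : Continuous (ext h) := h.1.continuous.Icc_extend'
  let F : B → B := fun h =>
    ⟨⟨(Icc a b).domRestrict (Φ (ext h)), (hcont _ (ext_cont h)).domRestrict⟩,
      (mem_B _).2 fun x => hbound _ (ext_cont h) x x.2⟩
  have ext_F (h : B) : EqOn (ext (F h)) (Φ (ext h)) (Icc a b) := fun t ht =>
    IccExtend_of_mem hab _ ht
  obtain ⟨h, hfix, huniq⟩ := exists_unique_isFixedPt_of_dist_iterate_le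
    (dist_iterate_le_of_volterra hab hL (F := F) fun h₁ h₂ t ht => by
      show |ext (F h₁) t - ext (F h₂) t| ≤ L * ∫ s in t..b, |ext h₁ s - ext h₂ s|
      rw [ext_F h₁ ht, ext_F h₂ ht]
      exact hlip _ _ (ext_cont _) (ext_cont _) (fun s => (mem_B _).1 h₁.2 _)
        (fun s => (mem_B _).1 h₂.2 _) t ht)
  refine ⟨ext h, ext_cont h, fun t ht => ?_, fun g hg hgfix => ?_⟩
  · rw [← ext_F h ht, hfix]
  · set g₀ : C(Icc a b, ℝ) := ⟨(Icc a b).domRestrict g, hg.domRestrict⟩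
    have hg₀ : EqOn (IccExtend hab g₀) g (Icc a b) := fun t ht => IccExtend_of_mem hab _ ht
    have hΦg : EqOn (Φ (IccExtend hab g₀)) g (Icc a b) := fun t ht =>
      (hlocal _ _ hg₀ ht).trans (hgfix ht).symm
    let G : B := ⟨g₀, (mem_B _).2 fun x => by
      show |g x| ≤ M; rw [← hΦg x.2]; exact hbound _ g₀.continuous.Icc_extend' x x.2⟩
    have hGfix : IsFixedPt F G := Subtype.ext <| ContinuousMap.ext fun x => hΦg x.2
    intro t ht
    rw [← hg₀ ht]
    exact congrArg (fun h : B => IccExtend hab h.1 t) (huniq G hGfix)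

namespace MeanVarianceEquation

variable (T ξ γ₀ : ℝ) (r Θ f : ℝ → ℝ)

noncomputable def g1Rate (s : ℝ) : ℝ :=
  r s + Θ s * f s / (ξ + 1) ^ 2

noncomputable def h2Rate (s : ℝ) : ℝ :=
  2 * r s + 2 * Θ s * f s / (ξ + 1) ^ 2 + Θ s * f s ^ 2 / (ξ + 1) ^ 2

/-- Chosen so that `Ĝ₁ / Ĥ₂ = exp (P t - P T)` for the primitive `P = potential`. -/
noncomputable def potentialRate (s : ℝ) : ℝ :=
  h2Rate ξ r Θ f s - g1Rate ξ r Θ f s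

/-- Chosen so that `Ĝ₁² / Ĥ₂ = exp (Q t - Q T)` for the primitive `Q = penalty`. -/
noncomputable def penaltyRate (s : ℝ) : ℝ :=
  h2Rate ξ r Θ f s - 2 * g1Rate ξ r Θ f s

noncomputable def potential (t : ℝ) : ℝ :=
  ∫ s in (0 : ℝ)..t, potentialRate ξ r Θ f s

noncomputable def penalty (t : ℝ) : ℝ :=
  ∫ s in (0 : ℝ)..t, penaltyRate ξ r Θ f s

/-- The equation divided by `γ₀ Ĥ₂[f](t)`. -/
noncomputable def fixedPointMap (t : ℝ) : ℝ :=
  exp (potential ξ r Θ f t - potential ξ r Θ f T) / γ₀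
    + ξ / (2 * (ξ + 1) ^ 2) *
        (∫ s in t..T, Θ s * f s ^ 2 * exp (potential ξ r Θ f t - potential ξ r Θ f s))
    + exp (penalty ξ r Θ f t - penalty ξ r Θ f T) - 1

variable {T ξ γ₀ r Θ f}

theorem potentialRate_eq (s : ℝ) :
    potentialRate ξ r Θ f s = r s + Θ s * (f s + f s ^ 2) / (ξ + 1) ^ 2 := by
  simp only [potentialRate, h2Rate, g1Rate]; ring

theorem penaltyRate_eq (s : ℝ) : penaltyRate ξ r Θ f s = Θ s * f s ^ 2 / (ξ + 1) ^ 2 := by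
  simp only [penaltyRate, h2Rate, g1Rate]; ring

theorem G1h_eq (t : ℝ) : G1h T ξ r Θ f t = exp (∫ s in t..T, g1Rate ξ r Θ f s) := rfl

theorem H2h_eq (t : ℝ) : H2h T ξ r Θ f t = exp (∫ s in t..T, h2Rate ξ r Θ f s) := rfl

section Identity

variable (hr : ContinuousOn r (Icc 0 T)) (hΘ : ContinuousOn Θ (Icc 0 T))
  (hf : ContinuousOn f (Icc 0 T))
include hr hΘ hf

theorem integral_sub_integral_of_rate_eq {ρ : ℝ → ℝ} {c : ℝ}
    (hρ : ∀ s, ρ s = h2Rate ξ r Θ f s - c * g1Rate ξ r Θ f s) {t u : ℝ}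
    (ht : t ∈ Icc 0 T) (hu : u ∈ Icc 0 T) :
    (∫ s in (0 : ℝ)..u, ρ s) - ∫ s in (0 : ℝ)..t, ρ s =
      (∫ s in t..u, h2Rate ξ r Θ f s) - c * ∫ s in t..u, g1Rate ξ r Θ f s := by
  have h0 : (0 : ℝ) ∈ Icc 0 T := ⟨le_rfl, ht.1.trans ht.2⟩
  have hg1 : ContinuousOn (g1Rate ξ r Θ f) (Icc 0 T) := by unfold g1Rate; fun_prop
  have hh2 : ContinuousOn (h2Rate ξ r Θ f) (Icc 0 T) := by unfold h2Rate; fun_prop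
  have hρc : ContinuousOn ρ (Icc 0 T) := by
    rw [funext hρ]; fun_prop
  rw [integral_interval_sub_left (hρc.intervalIntegrable_of_mem_Icc h0 hu)
      (hρc.intervalIntegrable_of_mem_Icc h0 ht), ← intervalIntegral.integral_const_mul,
    ← integral_sub (hh2.intervalIntegrable_of_mem_Icc ht hu)
      ((hg1.intervalIntegrable_of_mem_Icc ht hu).const_mul c)]
  exact integral_congr fun s _ => hρ s

theorem potential_sub_potential_eq {t u : ℝ} (ht : t ∈ Icc 0 T) (hu : u ∈ Icc 0 T) :
    potential ξ r Θ f u - potential ξ r Θ f t =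
      (∫ s in t..u, h2Rate ξ r Θ f s) - ∫ s in t..u, g1Rate ξ r Θ f s := by
  simpa [potential] using integral_sub_integral_of_rate_eq hr hΘ hf (c := 1) (fun _ => by
    rw [one_mul]; rfl) ht hu

theorem penalty_sub_penalty_eq {t u : ℝ} (ht : t ∈ Icc 0 T) (hu : u ∈ Icc 0 T) :
    penalty ξ r Θ f u - penalty ξ r Θ f t =
      (∫ s in t..u, h2Rate ξ r Θ f s) - 2 * ∫ s in t..u, g1Rate ξ r Θ f s :=
  integral_sub_integral_of_rate_eq hr hΘ hf (fun _ => rfl) ht hu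

theorem H2h_mul_exp_potential_sub {t u : ℝ} (ht : t ∈ Icc 0 T) (hu : u ∈ Icc 0 T) :
    H2h T ξ r Θ f t * exp (potential ξ r Θ f t - potential ξ r Θ f u) =
      H2h T ξ r Θ f u * exp (∫ s in t..u, g1Rate ξ r Θ f s) := by
  have hh2 : ContinuousOn (h2Rate ξ r Θ f) (Icc 0 T) := by unfold h2Rate; fun_prop
  have hsplit := integral_add_adjacent_intervals (hh2.intervalIntegrable_of_mem_Icc ht hu)
    (hh2.intervalIntegrable_of_mem_Icc hu ⟨ht.1.trans ht.2, le_rfl⟩)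
  rw [H2h_eq, H2h_eq, ← exp_add, ← exp_add]
  congr 1
  linarith [potential_sub_potential_eq (ξ := ξ) hr hΘ hf ht hu]

theorem H2h_mul_exp_penalty_sub {t : ℝ} (ht : t ∈ Icc 0 T) :
    H2h T ξ r Θ f t * exp (penalty ξ r Θ f t - penalty ξ r Θ f T) = G1h T ξ r Θ f t ^ 2 := by
  rw [H2h_eq, G1h_eq, ← exp_add, ← exp_nat_mul]
  congr 1
  push_cast
  linarith [penalty_sub_penalty_eq (ξ := ξ) hr hΘ hf ht ⟨ht.1.trans ht.2, le_rfl⟩]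

theorem H1h_add_eq_mul_fixedPointMap (hγ : γ₀ ≠ 0) {t : ℝ} (ht : t ∈ Icc 0 T) :
    H1h T ξ γ₀ r Θ f t + γ₀ * (G1h T ξ r Θ f t ^ 2 - H2h T ξ r Θ f t) =
      γ₀ * H2h T ξ r Θ f t * fixedPointMap T ξ γ₀ r Θ f t := by
  have hT : T ∈ Icc 0 T := ⟨ht.1.trans ht.2, le_rfl⟩
  have hG1 : H2h T ξ r Θ f t * exp (potential ξ r Θ f t - potential ξ r Θ f T) =
      G1h T ξ r Θ f t := by
    simpa [H2h_eq, G1h_eq] using H2h_mul_exp_potential_sub hr hΘ hf ht hT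
  have hint : (∫ s in t..T, ξ * Θ s * f s ^ 2 / (2 * (ξ + 1) ^ 2) * (γ₀ * H2h T ξ r Θ f s) *
        exp (∫ u in t..s, r u + Θ u * f u / (ξ + 1) ^ 2)) =
      γ₀ * H2h T ξ r Θ f t * (ξ / (2 * (ξ + 1) ^ 2) *
        ∫ s in t..T, Θ s * f s ^ 2 * exp (potential ξ r Θ f t - potential ξ r Θ f s)) := by
    rw [← intervalIntegral.integral_const_mul, ← intervalIntegral.integral_const_mul]
    refine integral_congr fun s hs => ?_
    rw [uIcc_of_le ht.2] at hs
    have h := H2h_mul_exp_potential_sub (ξ := ξ) hr hΘ hf ht ⟨ht.1.trans hs.1, hs.2⟩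
    simp only [g1Rate] at h
    linear_combination (-(ξ * γ₀ * Θ s * f s ^ 2) / (2 * (ξ + 1) ^ 2)) * h
  rw [H1h, hint, fixedPointMap, ← H2h_mul_exp_penalty_sub hr hΘ hf ht, ← hG1]
  field_simp
  ring

theorem eqOn_fixedPointMap_iff (hγ : 0 < γ₀) :
    (∀ t ∈ Icc 0 T, f t * (γ₀ * H2h T ξ r Θ f t) =
        H1h T ξ γ₀ r Θ f t + γ₀ * (G1h T ξ r Θ f t ^ 2 - H2h T ξ r Θ f t)) ↔
      EqOn f (fixedPointMap T ξ γ₀ r Θ f) (Icc 0 T) := by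
  refine forall₂_congr fun t ht => ?_
  have hpos : γ₀ * H2h T ξ r Θ f t ≠ 0 := (mul_pos hγ (exp_pos _)).ne'
  rw [H1h_add_eq_mul_fixedPointMap hr hΘ hf hγ.ne' ht, mul_comm (f t), mul_right_inj' hpos]

end Identity

theorem fixedPointMap_congr {r' Θ' f' : ℝ → ℝ} (hr : EqOn r r' (Icc 0 T)) (hΘ : EqOn Θ Θ' (Icc 0 T))
    (hf : EqOn f f' (Icc 0 T)) :
    EqOn (fixedPointMap T ξ γ₀ r Θ f) (fixedPointMap T ξ γ₀ r' Θ' f') (Icc 0 T) := by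
  intro t ht
  have hT : T ∈ Icc 0 T := ⟨ht.1.trans ht.2, le_rfl⟩
  have hsub {u : ℝ} (hu : u ∈ Icc 0 T) : uIcc 0 u ⊆ Icc 0 T :=
    uIcc_subset_Icc ⟨le_rfl, ht.1.trans ht.2⟩ hu
  have hP {u : ℝ} (hu : u ∈ Icc 0 T) : potential ξ r Θ f u = potential ξ r' Θ' f' u :=
    integral_congr fun s hs => by
      simp only [potentialRate, h2Rate, g1Rate, hr (hsub hu hs), hΘ (hsub hu hs), hf (hsub hu hs)]
  have hQ {u : ℝ} (hu : u ∈ Icc 0 T) : penalty ξ r Θ f u = penalty ξ r' Θ' f' u :=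
    integral_congr fun s hs => by
      simp only [penaltyRate, h2Rate, g1Rate, hr (hsub hu hs), hΘ (hsub hu hs), hf (hsub hu hs)]
  have hI : (∫ s in t..T, Θ s * f s ^ 2 * exp (potential ξ r Θ f t - potential ξ r Θ f s)) =
      ∫ s in t..T, Θ' s * f' s ^ 2 * exp (potential ξ r' Θ' f' t - potential ξ r' Θ' f' s) :=
    integral_congr fun s hs => by
      have hs' := uIcc_subset_Icc ht hT hs
      rw [hΘ hs', hf hs', hP ht, hP hs']
  rw [fixedPointMap, fixedPointMap, hI, hP ht, hP hT, hQ ht, hQ hT]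

section Estimates

variable {Cr CΘ : ℝ}

theorem continuous_potentialRate (hr : Continuous r) (hΘ : Continuous Θ) (hf : Continuous f) :
    Continuous (potentialRate ξ r Θ f) := by
  rw [funext potentialRate_eq]; fun_prop

theorem continuous_penaltyRate (hΘ : Continuous Θ) (hf : Continuous f) :
    Continuous (penaltyRate ξ r Θ f) := by
  rw [funext penaltyRate_eq]; fun_prop

theorem hasDerivAt_penalty (hΘ : Continuous Θ) (hf : Continuous f) (t : ℝ) :
    HasDerivAt (penalty ξ r Θ f) (penaltyRate ξ r Θ f t) t :=
  ((continuous_penaltyRate hΘ hf).integral_hasStrictDerivAt 0 t).hasDerivAt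

theorem penaltyRate_nonneg {s : ℝ} (hΘ0 : 0 ≤ Θ s) : 0 ≤ penaltyRate ξ r Θ f s := by
  rw [penaltyRate_eq]; positivity

theorem penalty_mono (hΘ : Continuous Θ) (hf : Continuous f) (hΘ0 : ∀ s, 0 ≤ Θ s) :
    Monotone (penalty ξ r Θ f) :=
  monotone_of_hasDerivAt_nonneg (hasDerivAt_penalty hΘ hf) fun s => penaltyRate_nonneg (hΘ0 s)

theorem potentialRate_ge (hξ : 0 ≤ ξ) {s : ℝ} (hr : |r s| ≤ Cr) (hΘ0 : 0 ≤ Θ s)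
    (hΘC : Θ s ≤ CΘ) :
    penaltyRate ξ r Θ f s / 2 - (Cr + CΘ) ≤ potentialRate ξ r Θ f s := by
  have hξ1 : 1 ≤ (ξ + 1) ^ 2 := by nlinarith
  have hsq : 0 ≤ Θ s * (f s + 1) ^ 2 / (ξ + 1) ^ 2 := by positivity
  have hΘξ : Θ s / (ξ + 1) ^ 2 ≤ CΘ := (div_le_self hΘ0 hξ1).trans hΘC
  have hrs := neg_le_of_abs_le hr
  have hdiff : potentialRate ξ r Θ f s - penaltyRate ξ r Θ f s / 2 =
      r s + Θ s * (f s + 1) ^ 2 / (ξ + 1) ^ 2 / 2 - Θ s / (ξ + 1) ^ 2 / 2 := by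
    rw [potentialRate_eq, penaltyRate_eq]; ring
  linarith

theorem contDiff_potential (hr : Continuous r) (hΘ : Continuous Θ) (hf : Continuous f) :
    ContDiff ℝ 1 (potential ξ r Θ f) :=
  (continuous_potentialRate hr hΘ hf).contDiff_one_integral 0

theorem contDiff_penalty (hΘ : Continuous Θ) (hf : Continuous f) :
    ContDiff ℝ 1 (penalty ξ r Θ f) :=
  (continuous_penaltyRate hΘ hf).contDiff_one_integral 0

theorem contDiff_fixedPointMap (hr : Continuous r) (hΘ : Continuous Θ) (hf : Continuous f) :
    ContDiff ℝ 1 (fixedPointMap T ξ γ₀ r Θ f) := by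
  set P := potential ξ r Θ f
  have hP : ContDiff ℝ 1 P := contDiff_potential hr hΘ hf
  have hQ : ContDiff ℝ 1 (penalty ξ r Θ f) := contDiff_penalty hΘ hf
  have hw : Continuous fun s => Θ s * f s ^ 2 * exp (-P s) := by
    have := hP.continuous; fun_prop
  -- factor `exp (P t)` out of the integral, leaving a primitive of a continuous function
  have hsplit : fixedPointMap T ξ γ₀ r Θ f = fun t => exp (P t - P T) / γ₀
      + ξ / (2 * (ξ + 1) ^ 2) * (exp (P t) *
        ((∫ s in (0 : ℝ)..T, Θ s * f s ^ 2 * exp (-P s)) -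
          ∫ s in (0 : ℝ)..t, Θ s * f s ^ 2 * exp (-P s)))
      + exp (penalty ξ r Θ f t - penalty ξ r Θ f T) - 1 := by
    funext t
    rw [fixedPointMap, integral_interval_sub_left (μ := volume) (hw.intervalIntegrable 0 T)
      (hw.intervalIntegrable 0 t)]
    congr 4
    rw [← intervalIntegral.integral_const_mul]
    refine integral_congr fun s _ => ?_
    simp only [sub_eq_add_neg, exp_add]
    ring
  rw [hsplit]
  have := hw.contDiff_one_integral 0
  fun_prop

variable (hξ : 0 ≤ ξ) (hr : Continuous r) (hΘ : Continuous Θ) (hf : Continuous f)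
  (hCr : ∀ s, |r s| ≤ Cr) (hΘ0 : ∀ s, 0 ≤ Θ s) (hΘC : ∀ s, Θ s ≤ CΘ)
include hξ hr hΘ hf hCr hΘ0 hΘC

theorem potential_sub_potential_le {u v : ℝ} (huv : u ≤ v) :
    potential ξ r Θ f u - potential ξ r Θ f v ≤
      (Cr + CΘ) * (v - u) - (penalty ξ r Θ f v - penalty ξ r Θ f u) / 2 := by
  have hψ := continuous_potentialRate (ξ := ξ) hr hΘ hf
  have hq := continuous_penaltyRate (ξ := ξ) (r := r) hΘ hf
  have hmono : (∫ s in u..v, (penaltyRate ξ r Θ f s / 2 - (Cr + CΘ))) ≤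
      ∫ s in u..v, potentialRate ξ r Θ f s :=
    integral_mono_on huv (((hq.div_const 2).sub continuous_const).intervalIntegrable _ _)
      (hψ.intervalIntegrable _ _) fun s _ => potentialRate_ge hξ (hCr s) (hΘ0 s) (hΘC s)
  rw [integral_sub ((hq.div_const 2).intervalIntegrable _ _) intervalIntegrable_const,
    intervalIntegral.integral_div, intervalIntegral.integral_const, smul_eq_mul] at hmono
  have hP := integral_interval_sub_left (μ := volume) (hψ.intervalIntegrable 0 v)
    (hψ.intervalIntegrable 0 u)
  have hQ := integral_interval_sub_left (μ := volume) (hq.intervalIntegrable 0 v)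
    (hq.intervalIntegrable 0 u)
  simp only [potential, penalty]
  linarith

theorem potential_sub_le_add_penalty_sub {t s : ℝ} (ht : 0 ≤ t) (hts : t ≤ s) (hsT : s ≤ T) :
    potential ξ r Θ f t - potential ξ r Θ f s ≤
      (Cr + CΘ) * T + (penalty ξ r Θ f t - penalty ξ r Θ f s) / 2 := by
  have hκ : 0 ≤ Cr + CΘ := by linarith [(abs_nonneg _).trans (hCr 0), hΘ0 0, hΘC 0]
  have := potential_sub_potential_le hξ hr hΘ hf hCr hΘ0 hΘC hts
  nlinarith

theorem potential_sub_le_mul {t s : ℝ} (ht : 0 ≤ t) (hts : t ≤ s) (hsT : s ≤ T) :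
    potential ξ r Θ f t - potential ξ r Θ f s ≤ (Cr + CΘ) * T := by
  have := potential_sub_le_add_penalty_sub hξ hr hΘ hf hCr hΘ0 hΘC ht hts hsT
  linarith [penalty_mono (ξ := ξ) (r := r) hΘ hf hΘ0 hts]

theorem integral_mul_exp_potential_le {t : ℝ} (ht : t ∈ Icc 0 T) :
    ∫ s in t..T, Θ s * f s ^ 2 * exp (potential ξ r Θ f t - potential ξ r Θ f s) ≤
      2 * (ξ + 1) ^ 2 * exp ((Cr + CΘ) * T) := by
  set Q := penalty ξ r Θ f
  have hq := continuous_penaltyRate (ξ := ξ) (r := r) hΘ hf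
  have hQ : Continuous Q := (contDiff_penalty hΘ hf).continuous
  have hP : Continuous (potential ξ r Θ f) := (contDiff_potential hr hΘ hf).continuous
  have hpt : ∀ s ∈ Icc t T, Θ s * f s ^ 2 * exp (potential ξ r Θ f t - potential ξ r Θ f s) ≤
      (ξ + 1) ^ 2 * exp ((Cr + CΘ) * T) * (penaltyRate ξ r Θ f s * exp ((Q t - Q s) / 2)) := by
    intro s hs
    have hΘf : Θ s * f s ^ 2 = (ξ + 1) ^ 2 * penaltyRate ξ r Θ f s := by
      rw [penaltyRate_eq]; field_simp
    have hexp : exp (potential ξ r Θ f t - potential ξ r Θ f s) ≤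
        exp ((Cr + CΘ) * T) * exp ((Q t - Q s) / 2) := by
      rw [← exp_add]
      exact exp_le_exp.2 (potential_sub_le_add_penalty_sub hξ hr hΘ hf hCr hΘ0 hΘC ht.1 hs.1 hs.2)
    have hq0 : 0 ≤ (ξ + 1) ^ 2 * penaltyRate ξ r Θ f s :=
      mul_nonneg (sq_nonneg _) (penaltyRate_nonneg (hΘ0 s))
    rw [hΘf]
    linarith [mul_le_mul_of_nonneg_left hexp hq0]
  calc _ ≤ ∫ s in t..T, (ξ + 1) ^ 2 * exp ((Cr + CΘ) * T) *
          (penaltyRate ξ r Θ f s * exp ((Q t - Q s) / 2)) :=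
        integral_mono_on ht.2 (Continuous.intervalIntegrable (by fun_prop) _ _)
          (Continuous.intervalIntegrable (by fun_prop) _ _) hpt
    _ = (ξ + 1) ^ 2 * exp ((Cr + CΘ) * T) * (2 - 2 * exp ((Q t - Q T) / 2)) := by
        rw [intervalIntegral.integral_const_mul,
          integral_mul_exp_sub_div_two (hasDerivAt_penalty hΘ hf) hq]
    _ ≤ 2 * (ξ + 1) ^ 2 * exp ((Cr + CΘ) * T) := by
        have := mul_nonneg (mul_nonneg (sq_nonneg (ξ + 1)) (exp_pos ((Cr + CΘ) * T)).le)
          (exp_pos ((Q t - Q T) / 2)).le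
        linarith

theorem abs_fixedPointMap_le (hγ : 0 < γ₀) {t : ℝ} (ht : t ∈ Icc 0 T) :
    |fixedPointMap T ξ γ₀ r Θ f t| ≤
      exp ((Cr + CΘ) * T) / γ₀ + ξ * exp ((Cr + CΘ) * T) + 1 := by
  have hA : exp (potential ξ r Θ f t - potential ξ r Θ f T) / γ₀ ≤ exp ((Cr + CΘ) * T) / γ₀ :=
    div_le_div_of_nonneg_right
      (exp_le_exp.2 (potential_sub_le_mul hξ hr hΘ hf hCr hΘ0 hΘC ht.1 ht.2 le_rfl)) hγ.le
  have hB : ξ / (2 * (ξ + 1) ^ 2) *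
      (∫ s in t..T, Θ s * f s ^ 2 * exp (potential ξ r Θ f t - potential ξ r Θ f s)) ≤
        ξ * exp ((Cr + CΘ) * T) := by
    calc _ ≤ ξ / (2 * (ξ + 1) ^ 2) * (2 * (ξ + 1) ^ 2 * exp ((Cr + CΘ) * T)) := by
          gcongr; exact integral_mul_exp_potential_le hξ hr hΘ hf hCr hΘ0 hΘC ht
      _ = ξ * exp ((Cr + CΘ) * T) := by field_simp
  have hC : exp (penalty ξ r Θ f t - penalty ξ r Θ f T) ≤ 1 :=
    exp_le_one_iff.2 (sub_nonpos.2 (penalty_mono hΘ hf hΘ0 ht.2))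
  have hB0 : 0 ≤ ξ / (2 * (ξ + 1) ^ 2) *
      (∫ s in t..T, Θ s * f s ^ 2 * exp (potential ξ r Θ f t - potential ξ r Θ f s)) :=
    mul_nonneg (by positivity) (integral_nonneg ht.2 fun s _ => by have := hΘ0 s; positivity)
  have hA0 : 0 < exp (potential ξ r Θ f t - potential ξ r Θ f T) / γ₀ := by positivity
  have hE0 : 0 ≤ ξ * exp ((Cr + CΘ) * T) := by positivity
  rw [abs_le, fixedPointMap]
  constructor <;> linarith [exp_pos (penalty ξ r Θ f t - penalty ξ r Θ f T)]

end Estimates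

section Lipschitz

variable {Cr CΘ M : ℝ} {g : ℝ → ℝ}

theorem abs_potentialRate_sub_le (hξ : 0 ≤ ξ) {s : ℝ} (hΘ0 : 0 ≤ Θ s) (hΘC : Θ s ≤ CΘ)
    (hfM : |f s| ≤ M) (hgM : |g s| ≤ M) :
    |potentialRate ξ r Θ f s - potentialRate ξ r Θ g s| ≤ CΘ * (1 + 2 * M) * |f s - g s| := by
  rw [potentialRate_eq, potentialRate_eq, add_sub_add_left_eq_sub, ← sub_div, ← mul_sub,
    mul_assoc]
  exact (abs_mul_div_sq_le hξ hΘ0 hΘC).trans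
    (mul_le_mul_of_nonneg_left (abs_add_sq_sub_add_sq_le hfM hgM) (hΘ0.trans hΘC))

theorem abs_penaltyRate_sub_le (hξ : 0 ≤ ξ) {s : ℝ} (hΘ0 : 0 ≤ Θ s) (hΘC : Θ s ≤ CΘ)
    (hfM : |f s| ≤ M) (hgM : |g s| ≤ M) :
    |penaltyRate ξ r Θ f s - penaltyRate ξ r Θ g s| ≤ CΘ * (1 + 2 * M) * |f s - g s| := by
  rw [penaltyRate_eq, penaltyRate_eq, ← sub_div, ← mul_sub, mul_assoc]
  exact (abs_mul_div_sq_le hξ hΘ0 hΘC).trans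
    (mul_le_mul_of_nonneg_left (abs_sq_sub_sq_le hfM hgM) (hΘ0.trans hΘC))

theorem abs_potential_sub_sub_le (hξ : 0 ≤ ξ) (hr : Continuous r) (hΘ : Continuous Θ)
    (hf : Continuous f) (hg : Continuous g) (hΘ0 : ∀ s, 0 ≤ Θ s) (hΘC : ∀ s, Θ s ≤ CΘ)
    (hfM : ∀ s, |f s| ≤ M) (hgM : ∀ s, |g s| ≤ M) {t v : ℝ} (htv : t ≤ v) (hvT : v ≤ T) :
    |(potential ξ r Θ f t - potential ξ r Θ f v) - (potential ξ r Θ g t - potential ξ r Θ g v)|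
      ≤ CΘ * (1 + 2 * M) * ∫ s in t..T, |f s - g s| :=
  abs_primitive_sub_sub_le (continuous_potentialRate hr hΘ hf)
    (continuous_potentialRate hr hΘ hg) (by fun_prop) (fun s => abs_nonneg _)
    (mul_nonneg ((hΘ0 0).trans (hΘC 0)) (by linarith [(abs_nonneg _).trans (hfM 0)]))
    (fun s => abs_potentialRate_sub_le hξ (hΘ0 s) (hΘC s) (hfM s) (hgM s)) htv hvT

theorem abs_penalty_sub_sub_le (hξ : 0 ≤ ξ) (hΘ : Continuous Θ)
    (hf : Continuous f) (hg : Continuous g) (hΘ0 : ∀ s, 0 ≤ Θ s) (hΘC : ∀ s, Θ s ≤ CΘ)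
    (hfM : ∀ s, |f s| ≤ M) (hgM : ∀ s, |g s| ≤ M) {t v : ℝ} (htv : t ≤ v) (hvT : v ≤ T) :
    |(penalty ξ r Θ f t - penalty ξ r Θ f v) - (penalty ξ r Θ g t - penalty ξ r Θ g v)|
      ≤ CΘ * (1 + 2 * M) * ∫ s in t..T, |f s - g s| :=
  abs_primitive_sub_sub_le (continuous_penaltyRate hΘ hf)
    (continuous_penaltyRate hΘ hg) (by fun_prop) (fun s => abs_nonneg _)
    (mul_nonneg ((hΘ0 0).trans (hΘC 0)) (by linarith [(abs_nonneg _).trans (hfM 0)]))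
    (fun s => abs_penaltyRate_sub_le hξ (hΘ0 s) (hΘC s) (hfM s) (hgM s)) htv hvT

variable (hξ : 0 ≤ ξ) (hr : Continuous r) (hΘ : Continuous Θ) (hf : Continuous f)
  (hg : Continuous g) (hCr : ∀ s, |r s| ≤ Cr) (hΘ0 : ∀ s, 0 ≤ Θ s) (hΘC : ∀ s, Θ s ≤ CΘ)
  (hfM : ∀ s, |f s| ≤ M) (hgM : ∀ s, |g s| ≤ M)
include hξ hr hΘ hf hg hCr hΘ0 hΘC hfM hgM

theorem abs_mul_exp_potential_sub_le {t s : ℝ} (ht : 0 ≤ t) (hts : t ≤ s) (hsT : s ≤ T) :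
    |Θ s * f s ^ 2 * exp (potential ξ r Θ f t - potential ξ r Θ f s) -
        Θ s * g s ^ 2 * exp (potential ξ r Θ g t - potential ξ r Θ g s)| ≤
      exp ((Cr + CΘ) * T) * (CΘ * (1 + 2 * M)) *
        (|f s - g s| + CΘ * M ^ 2 * ∫ u in t..T, |f u - g u|) := by
  set E := exp ((Cr + CΘ) * T)
  set K := CΘ * (1 + 2 * M)
  set D := ∫ u in t..T, |f u - g u|
  set Xf := potential ξ r Θ f t - potential ξ r Θ f s
  set Xg := potential ξ r Θ g t - potential ξ r Θ g s
  have hCΘ : 0 ≤ CΘ := (hΘ0 0).trans (hΘC 0)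
  have hK : 0 ≤ K := mul_nonneg hCΘ (by linarith [(abs_nonneg _).trans (hfM 0)])
  have hXf : Xf ≤ (Cr + CΘ) * T := potential_sub_le_mul hξ hr hΘ hf hCr hΘ0 hΘC ht hts hsT
  have hXg : Xg ≤ (Cr + CΘ) * T := potential_sub_le_mul hξ hr hΘ hg hCr hΘ0 hΘC ht hts hsT
  have hexp : |exp Xf - exp Xg| ≤ E * (K * D) :=
    (abs_exp_sub_exp_le hXf hXg).trans (mul_le_mul_of_nonneg_left
      (abs_potential_sub_sub_le hξ hr hΘ hf hg hΘ0 hΘC hfM hgM hts hsT) (exp_pos _).le)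
  have hsq : |Θ s * (f s ^ 2 - g s ^ 2)| ≤ K * |f s - g s| := by
    rw [abs_mul, abs_of_nonneg (hΘ0 s), mul_assoc]
    exact mul_le_mul (hΘC s) (abs_sq_sub_sq_le (hfM s) (hgM s)) (abs_nonneg _) hCΘ
  have hΘg : |Θ s * g s ^ 2| ≤ CΘ * M ^ 2 := by
    rw [abs_mul, abs_of_nonneg (hΘ0 s), abs_pow]
    exact mul_le_mul (hΘC s) (pow_le_pow_left₀ (abs_nonneg _) (hgM s) 2) (by positivity) hCΘ
  have hEf : exp Xf ≤ E := exp_le_exp.2 hXf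
  calc _ = |Θ s * (f s ^ 2 - g s ^ 2) * exp Xf + Θ s * g s ^ 2 * (exp Xf - exp Xg)| := by
        ring_nf
    _ ≤ |Θ s * (f s ^ 2 - g s ^ 2)| * exp Xf + |Θ s * g s ^ 2| * |exp Xf - exp Xg| := by
        rw [← abs_of_pos (exp_pos Xf), ← abs_mul, ← abs_mul, abs_of_pos (exp_pos _)]
        exact abs_add_le _ _
    _ ≤ K * |f s - g s| * E + CΘ * M ^ 2 * (E * (K * D)) := by gcongr
    _ = E * K * (|f s - g s| + CΘ * M ^ 2 * D) := by ring

theorem abs_integral_mul_exp_potential_sub_le {t : ℝ} (ht : t ∈ Icc 0 T) :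
    |(∫ s in t..T, Θ s * f s ^ 2 * exp (potential ξ r Θ f t - potential ξ r Θ f s)) -
        ∫ s in t..T, Θ s * g s ^ 2 * exp (potential ξ r Θ g t - potential ξ r Θ g s)| ≤
      exp ((Cr + CΘ) * T) * (CΘ * (1 + 2 * M)) * (1 + CΘ * M ^ 2 * T) *
        ∫ s in t..T, |f s - g s| := by
  set E := exp ((Cr + CΘ) * T)
  set K := CΘ * (1 + 2 * M)
  set D := ∫ s in t..T, |f s - g s|
  have hEK : 0 ≤ E * K :=
    mul_nonneg (exp_pos _).le (mul_nonneg ((hΘ0 0).trans (hΘC 0))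
      (by linarith [(abs_nonneg _).trans (hfM 0)]))
  have hrest : 0 ≤ CΘ * M ^ 2 * D :=
    mul_nonneg (mul_nonneg ((hΘ0 0).trans (hΘC 0)) (sq_nonneg _))
      (integral_nonneg ht.2 fun s _ => abs_nonneg _)
  have hw (h : ℝ → ℝ) (hh : Continuous h) :
      Continuous fun s => Θ s * h s ^ 2 * exp (potential ξ r Θ h t - potential ξ r Θ h s) := by
    have := (contDiff_potential (ξ := ξ) hr hΘ hh).continuous
    fun_prop
  rw [← integral_sub ((hw f hf).intervalIntegrable _ _) ((hw g hg).intervalIntegrable _ _)]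
  refine (abs_integral_le_integral_abs ht.2).trans ?_
  calc _ ≤ ∫ s in t..T, E * K * (|f s - g s| + CΘ * M ^ 2 * D) :=
        integral_mono_on ht.2 (Continuous.intervalIntegrable (by fun_prop) _ _)
          (Continuous.intervalIntegrable (by fun_prop) _ _) fun s hs =>
            abs_mul_exp_potential_sub_le hξ hr hΘ hf hg hCr hΘ0 hΘC hfM hgM ht.1 hs.1 hs.2
    _ = E * K * (D + (T - t) * (CΘ * M ^ 2 * D)) := by
        rw [intervalIntegral.integral_const_mul, integral_add (f := fun s => |f s - g s|)
          (Continuous.intervalIntegrable (by fun_prop) _ _) intervalIntegrable_const,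
          intervalIntegral.integral_const, smul_eq_mul]
    _ ≤ E * K * (1 + CΘ * M ^ 2 * T) * D := by
        have : (T - t) * (CΘ * M ^ 2 * D) ≤ T * (CΘ * M ^ 2 * D) :=
          mul_le_mul_of_nonneg_right (by linarith [ht.1]) hrest
        nlinarith

theorem abs_fixedPointMap_sub_le (hγ : 0 < γ₀) {t : ℝ} (ht : t ∈ Icc 0 T) :
    |fixedPointMap T ξ γ₀ r Θ f t - fixedPointMap T ξ γ₀ r Θ g t| ≤
      (exp ((Cr + CΘ) * T) * (CΘ * (1 + 2 * M)) / γ₀ +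
        ξ / (2 * (ξ + 1) ^ 2) *
          (exp ((Cr + CΘ) * T) * (CΘ * (1 + 2 * M)) * (1 + CΘ * M ^ 2 * T)) +
        CΘ * (1 + 2 * M)) * ∫ s in t..T, |f s - g s| := by
  set E := exp ((Cr + CΘ) * T)
  set K := CΘ * (1 + 2 * M)
  set D := ∫ s in t..T, |f s - g s|
  have hT : T ∈ Icc 0 T := ⟨ht.1.trans ht.2, le_rfl⟩
  have hA : |exp (potential ξ r Θ f t - potential ξ r Θ f T) -
      exp (potential ξ r Θ g t - potential ξ r Θ g T)| ≤ E * (K * D) :=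
    (abs_exp_sub_exp_le (potential_sub_le_mul hξ hr hΘ hf hCr hΘ0 hΘC ht.1 ht.2 le_rfl)
      (potential_sub_le_mul hξ hr hΘ hg hCr hΘ0 hΘC ht.1 ht.2 le_rfl)).trans
      (mul_le_mul_of_nonneg_left
        (abs_potential_sub_sub_le hξ hr hΘ hf hg hΘ0 hΘC hfM hgM ht.2 le_rfl) (exp_pos _).le)
  have hC : |exp (penalty ξ r Θ f t - penalty ξ r Θ f T) -
      exp (penalty ξ r Θ g t - penalty ξ r Θ g T)| ≤ K * D := by
    have := abs_exp_sub_exp_le (sub_nonpos.2 (penalty_mono (ξ := ξ) (r := r) hΘ hf hΘ0 ht.2))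
      (sub_nonpos.2 (penalty_mono (ξ := ξ) (r := r) hΘ hg hΘ0 ht.2))
    rw [exp_zero, one_mul] at this
    exact this.trans (abs_penalty_sub_sub_le hξ hΘ hf hg hΘ0 hΘC hfM hgM ht.2 le_rfl)
  have hB := abs_integral_mul_exp_potential_sub_le hξ hr hΘ hf hg hCr hΘ0 hΘC hfM hgM ht
  have hc : 0 ≤ ξ / (2 * (ξ + 1) ^ 2) := by positivity
  rw [fixedPointMap, fixedPointMap]
  calc _ = |(exp (potential ξ r Θ f t - potential ξ r Θ f T) -
          exp (potential ξ r Θ g t - potential ξ r Θ g T)) / γ₀ +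
        ξ / (2 * (ξ + 1) ^ 2) *
          ((∫ s in t..T, Θ s * f s ^ 2 * exp (potential ξ r Θ f t - potential ξ r Θ f s)) -
            ∫ s in t..T, Θ s * g s ^ 2 * exp (potential ξ r Θ g t - potential ξ r Θ g s)) +
        (exp (penalty ξ r Θ f t - penalty ξ r Θ f T) -
          exp (penalty ξ r Θ g t - penalty ξ r Θ g T))| := by ring_nf
    _ ≤ E * (K * D) / γ₀ + ξ / (2 * (ξ + 1) ^ 2) * (E * K * (1 + CΘ * M ^ 2 * T) * D) +
        K * D := by
      refine (abs_add_le _ _).trans (add_le_add ((abs_add_le _ _).trans (add_le_add ?_ ?_)) hC)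
      · rw [abs_div, abs_of_pos hγ]
        exact div_le_div_of_nonneg_right hA hγ.le
      · rw [abs_mul, abs_of_nonneg hc]
        exact mul_le_mul_of_nonneg_left hB hc
    _ = _ := by ring

end Lipschitz

theorem exists_unique_eqOn_fixedPointMap {Cr CΘ : ℝ} (hT : 0 ≤ T)
    (hγ : 0 < γ₀) (hξ : 0 ≤ ξ) (hr : Continuous r) (hΘ : Continuous Θ)
    (hCr : ∀ s, |r s| ≤ Cr) (hΘ0 : ∀ s, 0 ≤ Θ s) (hΘC : ∀ s, Θ s ≤ CΘ) :
    ∃ f, Continuous f ∧ EqOn f (fixedPointMap T ξ γ₀ r Θ f) (Icc 0 T) ∧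
      ∀ g, ContinuousOn g (Icc 0 T) → EqOn g (fixedPointMap T ξ γ₀ r Θ g) (Icc 0 T) →
        EqOn g f (Icc 0 T) := by
  have hCΘ : 0 ≤ CΘ := (hΘ0 0).trans (hΘC 0)
  set M := exp ((Cr + CΘ) * T) / γ₀ + ξ * exp ((Cr + CΘ) * T) + 1
  have hM : 0 ≤ M := by positivity
  exact exists_unique_eqOn_of_volterra hT (by positivity)
    (fun f g hfg => fixedPointMap_congr (eqOn_refl r _) (eqOn_refl Θ _) hfg)
    (fun f hf => (contDiff_fixedPointMap hr hΘ hf).continuous.continuousOn)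
    (fun f hf t ht => abs_fixedPointMap_le hξ hr hΘ hf hCr hΘ0 hΘC hγ ht)
    (fun f g hf hg hfM hgM t ht =>
      abs_fixedPointMap_sub_le hξ hr hΘ hf hg hCr hΘ0 hΘC hfM hgM hγ ht)

end MeanVarianceEquation

open MeanVarianceEquation

theorem mean_variance_robust_equation_unique_solution_general
    (T γ₀ ξ : ℝ) (hT : 0 < T) (hγ : 0 < γ₀) (hξ : 0 < ξ)
    (r Θ : ℝ → ℝ)
    (hrLip : ∃ K : NNReal, LipschitzOnWith K r (Set.Icc 0 T))
    (hΘLip : ∃ K : NNReal, LipschitzOnWith K Θ (Set.Icc 0 T))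
    (hΘpos : ∀ t ∈ Set.Icc 0 T, 0 ≤ Θ t) :
    ∃ f : ℝ → ℝ, SolvesMVIE T ξ γ₀ r Θ f ∧
      (∀ t ∈ Set.Icc 0 T, 0 < γ₀ * H2h T ξ r Θ f t) ∧
      ∀ g : ℝ → ℝ, SolvesMVIE T ξ γ₀ r Θ g → Set.EqOn f g (Set.Icc 0 T) := by
  have hr := hrLip.choose_spec.continuousOn
  have hΘ := hΘLip.choose_spec.continuousOn
  obtain ⟨Cr, hCr⟩ := isCompact_Icc.exists_bound_of_continuousOn hr
  obtain ⟨CΘ, hCΘ⟩ := isCompact_Icc.exists_bound_of_continuousOn hΘ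
  set R := IccExtend hT.le ((Icc 0 T).domRestrict r)
  set V := IccExtend hT.le ((Icc 0 T).domRestrict Θ)
  have hproj (s : ℝ) : (projIcc 0 T hT.le s : ℝ) ∈ Icc 0 T := (projIcc 0 T hT.le s).2
  obtain ⟨f, hf, hfix, huniq⟩ := exists_unique_eqOn_fixedPointMap hT.le hγ hξ.le
    hr.domRestrict.Icc_extend' hΘ.domRestrict.Icc_extend' (fun s => hCr _ (hproj s))
    (fun s => hΘpos _ (hproj s)) (fun s => (le_abs_self _).trans (hCΘ _ (hproj s)))
  have hsolves (g : ℝ → ℝ) : SolvesMVIE T ξ γ₀ r Θ g ↔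
      ContDiffOn ℝ 1 g (Icc 0 T) ∧ EqOn g (fixedPointMap T ξ γ₀ R V g) (Icc 0 T) :=
    and_congr_right fun hg => by
      have hRV : EqOn (fixedPointMap T ξ γ₀ r Θ g) (fixedPointMap T ξ γ₀ R V g) (Icc 0 T) :=
        fixedPointMap_congr (fun t ht => (IccExtend_of_mem hT.le ((Icc 0 T).domRestrict r) ht).symm)
          (fun t ht => (IccExtend_of_mem hT.le ((Icc 0 T).domRestrict Θ) ht).symm) (eqOn_refl g _)
      rw [eqOn_fixedPointMap_iff hr hΘ hg.continuousOn hγ]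
      exact ⟨fun h => h.trans hRV, fun h => h.trans hRV.symm⟩
  refine ⟨f, (hsolves f).2 ⟨?_, hfix⟩, fun t _ => mul_pos hγ (exp_pos _),
    fun g hg => (huniq g hg.1.continuousOn ((hsolves g).1 hg).2).symm⟩
  exact (contDiff_fixedPointMap hr.domRestrict.Icc_extend' hΘ.domRestrict.Icc_extend'
    hf).contDiffOn.congr hfix

/-- Corollary 2: the equation system (40) characterizing the robust
equilibrium investment strategy of the ambiguity-averse mean-variance
investor without skewness preference (the case `φ₀ = 0` of Theorem 4.1)
admits a unique C¹ solution on `[0,T]`; moreover the denominator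
`γ₀ Ĥ₂[f](t)` is automatically strictly positive. -/
theorem mean_variance_robust_equation_unique_solution
    (T γ₀ ξ : ℝ) (hT : 0 < T) (hγ : 0 < γ₀) (hξ : 0 < ξ)
    (r Θ : ℝ → ℝ)
    (hrLip : ∃ K : NNReal, LipschitzOnWith K r (Set.Icc 0 T))
    (hΘLip : ∃ K : NNReal, LipschitzOnWith K Θ (Set.Icc 0 T))
    (hrBdd : ∃ C : ℝ, ∀ t ∈ Set.Icc 0 T, |r t| ≤ C)
    (hΘBdd : ∃ C : ℝ, ∀ t ∈ Set.Icc 0 T, |Θ t| ≤ C)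
    (hΘpos : ∀ t ∈ Set.Icc 0 T, 0 ≤ Θ t) :
    ∃ f : ℝ → ℝ, SolvesMVIE T ξ γ₀ r Θ f ∧
      (∀ t ∈ Set.Icc 0 T, 0 < γ₀ * H2h T ξ r Θ f t) ∧
      ∀ g : ℝ → ℝ, SolvesMVIE T ξ γ₀ r Θ g → Set.EqOn f g (Set.Icc 0 T) :=
  mean_variance_robust_equation_unique_solution_general T γ₀ ξ hT hγ hξ r Θ hrLip hΘLip hΘpos
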